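/- arXiv:1410.2136 — 3 statements merged into one kernel-verified Lean document; each statement's English description precedes it below -/
import Mathlib

section
/- Let w̲ be a reduced expression for w ∈ W and x ≤ w. Then the ℝ-linear map f : Δ_{w̲}(x) → Hom^ℤ(BS(w̲), R_x) ⊗_R ℝ determined by l ↦ (β_x ∘ l) ⊗ 1 for l ∈ L_{w̲}(x) is an isomorphism of graded right A-modules, where A = End^ℤ(BS(w̲)) ⊗_R ℝ acts on Hom^ℤ(BS(w̲), R_x) ⊗_R ℝ by composition: (g ⊗ 1)(a ⊗ 1) = (g ∘ a) ⊗ 1. -/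
open CoxeterSystem

variable {B : Type*} {W : Type*} [Group W] {M : CoxeterMatrix B}

/-- The Bruhat order on a Coxeter group: `x ≤ y` iff there is a chain from `x` to `y`
each step of which multiplies on the right by a reflection and strictly increases length. -/
def bruhatLE (cs : CoxeterSystem M W) (x y : W) : Prop :=
  Relation.ReflTransGen
    (fun a b => (∃ t : W, cs.IsReflection t ∧ b = a * t) ∧ cs.length a < cs.length b) x y

/-- The strict Bruhat order. -/
def bruhatLT (cs : CoxeterSystem M W) (x y : W) : Prop :=
  Relation.TransGen
    (fun a b => (∃ t : W, cs.IsReflection t ∧ b = a * t) ∧ cs.length a < cs.length b) x y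

/-- The subword of `ω` selected by a list of Booleans. -/
def selectedWord : List B → List Bool → List B
  | s :: l, true :: e => s :: selectedWord l e
  | _ :: l, false :: e => selectedWord l e
  | _, _ => []

/-- The element of `W` obtained by multiplying the letters of `ω` selected by `e`. -/
def subwordProd (cs : CoxeterSystem M W) (ω : List B) (e : List Bool) : W :=
  cs.wordProd (selectedWord ω e)

/-- Light leaves of the Bott–Samelson bimodule `BS(ω)` with target `u` are indexed by
the 01-sequences (subexpressions) of `ω` whose selected subword multiplies to `u`. -/
def CLeaf (cs : CoxeterSystem M W) (ω : List B) (u : W) : Type _ :=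
  {e : Fin ω.length → Bool // subwordProd cs ω (List.ofFn e) = u}

instance (cs : CoxeterSystem M W) (ω : List B) (u : W) [DecidableEq W] :
    Fintype (CLeaf cs ω u) := by
  unfold CLeaf; infer_instance

/-- Number of morphisms of type `m_s` used in the construction of the light leaf indexed
by `e` (with partial product accumulated in the first argument). -/
noncomputable def nmAux (cs : CoxeterSystem M W) : W → List B → List Bool → ℕ
  | x, s :: l, b :: e =>
      (if cs.length (x * cs.simple s) = cs.length x + 1
        then (if b then 0 else 1) else (if b then 1 else 0))
      + nmAux cs (if b then x * cs.simple s else x) l e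
  | _, _, _ => 0

/-- Number of morphisms of type `j_s` used in the construction of the light leaf indexed
by `e`. -/
noncomputable def njAux (cs : CoxeterSystem M W) : W → List B → List Bool → ℕ
  | x, s :: l, b :: e =>
      (if cs.length (x * cs.simple s) = cs.length x + 1 then 0 else 1)
      + njAux cs (if b then x * cs.simple s else x) l e
  | _, _, _ => 0

/-- `n_m(l)` for a light leaf `l ∈ L_ω(u)`. -/
noncomputable def leafNm (cs : CoxeterSystem M W) (ω : List B) {u : W} (l : CLeaf cs ω u) : ℕ :=
  nmAux cs 1 ω (List.ofFn l.1)

/-- `n_j(l)` for a light leaf `l ∈ L_ω(u)`. -/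
noncomputable def leafNj (cs : CoxeterSystem M W) (ω : List B) {u : W} (l : CLeaf cs ω u) : ℕ :=
  njAux cs 1 ω (List.ofFn l.1)

/-- The degree of the light leaf indexed by `e`: `deg l = n_m(l) - n_j(l)`. -/
noncomputable def leafDeg (cs : CoxeterSystem M W) (ω : List B) {u : W} (l : CLeaf cs ω u) : ℤ :=
  (leafNm cs ω l : ℤ) - (leafNj cs ω l : ℤ)


open CategoryTheory

/-- An abstract environment for the category of Soergel bimodules of a Coxeter system
`(W,S)` over the polynomial ring `R`: a preadditive `R`-linear category containing the
Bott–Samelson bimodules `BS(ω)` and the standard bimodules `R_x`, together with a fixed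
reduced expression `ρ(u)` for every `u ∈ W`, Libedinsky's light leaves
`L_ω(u) = {leafMor l : BS(ω) ⟶ BS(ρ u)}` (indexed by the subexpressions `CLeaf cs ω u`),
their adjoint leaves, the morphisms `β_x : BS(x̲) ⟶ R_x`, and the facts that double
leaves form an `R`-basis of `Hom(BS(ω), BS(ψ))` and standard leaves form an `R`-basis of
`Hom(BS(ω), R_x)`. -/
structure SoergelHomData {B : Type*} {W : Type*} [Group W] {M : CoxeterMatrix B}
    (cs : CoxeterSystem M W) (R : Type*) [CommRing R] where
  /-- ambient category (of graded `(R,R)`-bimodules) -/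
  C : Type*
  [cat : Category.{v} C]
  [preadd : Preadditive C]
  [lin : CategoryTheory.Linear R C]
  /-- the Bott–Samelson bimodules -/
  BS : List B → C
  /-- the standard bimodules `R_x` -/
  Rstd : W → C
  /-- a fixed choice of reduced expression for each element of `W` -/
  rho : W → List B
  rho_prod : ∀ w, cs.wordProd (rho w) = w
  rho_reduced : ∀ w, cs.IsReduced (rho w)
  /-- the light leaf morphisms: `L_ω(u)` consists of the `leafMor ω u l` -/
  leafMor : ∀ (ω : List B) (u : W), CLeaf cs ω u → (BS ω ⟶ BS (rho u))
  /-- the adjoint leaves `l^a` -/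
  adj : ∀ (ω : List B) (u : W), CLeaf cs ω u → (BS (rho u) ⟶ BS ω)
  /-- the bimodule morphisms `β_x : BS(x̲) ⟶ R_x` -/
  beta : ∀ x : W, (BS (rho x) ⟶ Rstd x)
  /-- Libedinsky's double leaves theorem: the double leaves `l₂^a ∘ l₁` form an
  `R`-basis of `Hom^ℤ(BS(ω), BS(ψ))`. -/
  dl_basis : ∀ ω ψ : List B,
      ∃ b : Module.Basis (Σ u : W, CLeaf cs ω u × CLeaf cs ψ u) R (BS ω ⟶ BS ψ),
        ∀ p, b p = leafMor ω p.1 p.2.1 ≫ adj ψ p.1 p.2.2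
  /-- Libedinsky's standard leaves theorem: the standard leaves `β_x ∘ l` form an
  `R`-basis of `Hom^ℤ(BS(ω), R_x)`. -/
  std_basis : ∀ (ω : List B) (x : W),
      ∃ b : Module.Basis (CLeaf cs ω x) R (BS ω ⟶ Rstd x),
        ∀ l, b l = leafMor ω x l ≫ beta x

attribute [instance] SoergelHomData.cat SoergelHomData.preadd SoergelHomData.lin

variable {R : Type*} [CommRing R]

/-- `DL_{<x}`: the span of the double leaves `BS(ω) ⟶ BS(ψ)` factoring through some
`u < x` in the Bruhat order. -/
noncomputable def DLlt {cs : CoxeterSystem M W} (D : SoergelHomData cs R)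
    (ω ψ : List B) (x : W) : Submodule R (D.BS ω ⟶ D.BS ψ) :=
  Submodule.span R {f | ∃ (u : W) (_ : bruhatLT cs u x)
    (l₁ : CLeaf cs ω u) (l₂ : CLeaf cs ψ u), f = D.leafMor ω u l₁ ≫ D.adj ψ u l₂}


section Reduction

variable [Algebra ℝ R] (aug : R →ₐ[ℝ] ℝ)

/-- The ideal `R⁺` of the graded ring `R`, i.e. the kernel of the augmentation
`R → R/R⁺ ≅ ℝ`. -/
noncomputable def Rplus : Ideal R := RingHom.ker (aug : R →+* ℝ)

variable {Mo Mo' : Type*} [AddCommGroup Mo] [Module R Mo] [AddCommGroup Mo'] [Module R Mo']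

/-- The submodule `R⁺·M` of an `R`-module `M`. -/
noncomputable def redSub : Submodule R Mo := (Rplus aug) • (⊤ : Submodule R Mo)

/-- Reduction modulo `R⁺`: the quotient `M ⊗_R ℝ ≅ M/R⁺M`. -/
noncomputable def Red := Mo ⧸ (redSub aug : Submodule R Mo)

noncomputable instance : AddCommGroup (Red aug (Mo := Mo)) :=
  inferInstanceAs (AddCommGroup (Mo ⧸ (redSub aug : Submodule R Mo)))
noncomputable instance : Module R (Red aug (Mo := Mo)) :=
  inferInstanceAs (Module R (Mo ⧸ (redSub aug : Submodule R Mo)))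

/-- The canonical projection `M → M ⊗_R ℝ`. -/
noncomputable def redMk : Mo →ₗ[R] Red aug (Mo := Mo) := (redSub aug).mkQ

lemma redSub_stable (f : Mo →ₗ[R] Mo') :
    (redSub aug : Submodule R Mo) ≤ (redSub aug : Submodule R Mo').comap f := by
  rw [← Submodule.map_le_iff_le_comap]
  unfold redSub
  rw [Submodule.map_smul'']
  exact Submodule.smul_mono le_rfl le_top

/-- The map induced on reductions modulo `R⁺` by an `R`-linear map. -/
noncomputable def redMap (f : Mo →ₗ[R] Mo') :
    Red aug (Mo := Mo) →ₗ[R] Red aug (Mo := Mo') :=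
  Submodule.mapQ _ _ f (redSub_stable aug f)

end Reduction

/-!
STATEMENT 6: Let w̲ be a reduced expression for w ∈ W and x ≤ w.  Then the ℝ-linear map
f : Δ_{w̲}(x) → Hom^ℤ(BS(w̲), R_x) ⊗_R ℝ determined by l ↦ (β_x ∘ l) ⊗ 1 for
l ∈ L_{w̲}(x) is an isomorphism of graded right A-modules, where
A = End^ℤ(BS(w̲)) ⊗_R ℝ acts on Hom^ℤ(BS(w̲), R_x) ⊗_R ℝ by composition.

Here: the graded cell module Δ_{w̲}(x) is the ℝ-vector space `CLeaf cs ww x →₀ ℝ` with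
basis the light leaves L_{w̲}(x), graded by the degree of the leaves, and with the right
A-action `act` determined by the cellular structure constants: for a ∈ End^ℤ(BS(w̲)) and
a leaf l, if l ∘ a ≡ Σ_g g·r_g mod DL_{<x}, then l·(a ⊗ 1) = Σ_g (r_g mod R⁺)·g.  The
reduction `− ⊗_R ℝ` is realised as `Red : M ↦ M/R⁺M`, and A acts on the reduced Hom
space by (reduction of) precomposition.  "Isomorphism of graded right A-modules" =
bijective, A-equivariant, and degree-preserving for the given grading `grX` (for which
the standard leaf (β_x ∘ l) ⊗ 1 is homogeneous of degree deg l).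
-/

/-!
The standard leaves `β_x ∘ l` form an `R`-basis of `Hom(BS(w̲), R_x)`, so their reductions form
an `ℝ`-basis of `Hom(BS(w̲), R_x) ⊗_R ℝ`; this gives bijectivity, and homogeneity of the leaves
gives the grading. For equivariance, the congruence `a ≫ l ≡ Σ r_g • g mod DL_{<x}` becomes an
equality after composing with `β_x`: a double leaf in `DL_{<x}` factors through
`Hom(BS(u̲), R_x)` with `u < x`, which is zero because the reduced word `u̲` is too short to
contain a subexpression for `x`.
-/

section Reduction

variable [Algebra ℝ R] (aug : R →ₐ[ℝ] ℝ)
variable {Mo : Type*} [AddCommGroup Mo] [Module R Mo]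

lemma mem_rplus_iff (r : R) : r ∈ Rplus aug ↔ aug r = 0 := RingHom.mem_ker

lemma redMk_eq_zero_iff (m : Mo) : redMk aug m = 0 ↔ m ∈ (redSub aug : Submodule R Mo) :=
  Submodule.Quotient.mk_eq_zero _

lemma smul_mem_redSub {r : R} (hr : aug r = 0) (m : Mo) :
    r • m ∈ (redSub aug : Submodule R Mo) :=
  Submodule.smul_mem_smul ((mem_rplus_iff aug r).2 hr) Submodule.mem_top

lemma redMk_algebraMap_aug_smul (r : R) (m : Mo) :
    redMk aug (algebraMap ℝ R (aug r) • m) = redMk aug (r • m) := by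
  rw [← sub_eq_zero, ← map_sub, ← sub_smul, redMk_eq_zero_iff]
  exact smul_mem_redSub aug (by simp) m

lemma redMap_redMk {Mo' : Type*} [AddCommGroup Mo'] [Module R Mo'] (f : Mo →ₗ[R] Mo') (m : Mo) :
    redMap aug f (redMk aug m) = redMk aug (f m) :=
  Submodule.mapQ_apply _ _ _ _

lemma aug_repr_eq_zero_of_mem_redSub {ι : Type*} (b : Module.Basis ι R Mo) {m : Mo}
    (hm : m ∈ (redSub aug : Submodule R Mo)) (i : ι) : aug (b.repr m i) = 0 := by
  refine Submodule.smul_induction_on hm (fun r hr n _ => ?_) (fun p q hp hq => ?_)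
  · simp [(mem_rplus_iff aug r).1 hr]
  · simp [hp, hq]

variable {ι : Type*}

/-- The map `ℝ^(ι) → M ⊗_R ℝ`, `e_i ↦ v i ⊗ 1`. -/
noncomputable def redCombination (v : ι → Mo) : (ι →₀ ℝ) →+ Red aug (Mo := Mo) :=
  (redMk aug).toAddMonoidHom.comp <| (Finsupp.linearCombination R v).toAddMonoidHom.comp <|
    Finsupp.mapRange.addMonoidHom (algebraMap ℝ R).toAddMonoidHom

lemma redCombination_eq_redMk_linearCombination (v : ι → Mo) (φ : ι →₀ ℝ) :
    redCombination aug v φ =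
      redMk aug (Finsupp.linearCombination R v (φ.mapRange (algebraMap ℝ R) (map_zero _))) :=
  rfl

lemma redCombination_apply (v : ι → Mo) (φ : ι →₀ ℝ) :
    redCombination aug v φ = redMk aug (φ.sum fun i c => algebraMap ℝ R c • v i) := by
  simp [redCombination, Finsupp.linearCombination_apply, Finsupp.sum_mapRange_index]

lemma redCombination_single (v : ι → Mo) (i : ι) (c : ℝ) :
    redCombination aug v (Finsupp.single i c) = algebraMap ℝ R c • redMk aug (v i) := by
  simp [redCombination_apply]

lemma redCombination_smul (v : ι → Mo) (c : ℝ) (φ : ι →₀ ℝ) :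
    redCombination aug v (c • φ) = algebraMap ℝ R c • redCombination aug v φ := by
  induction φ using Finsupp.induction_linear with
  | zero => simp
  | add φ ψ hφ hψ => rw [smul_add, map_add, map_add, hφ, hψ, smul_add]
  | single i d => rw [Finsupp.smul_single, redCombination_single, redCombination_single, smul_eq_mul,
      map_mul, mul_smul]

lemma redCombination_sum_aug_smul_single [Fintype ι] (v : ι → Mo) (r : ι → R) :
    redCombination aug v (∑ i, aug (r i) • Finsupp.single i 1) = redMk aug (∑ i, r i • v i) := by
  simp only [map_sum, Finsupp.smul_single, smul_eq_mul, mul_one, redCombination_single,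
    ← map_smul, redMk_algebraMap_aug_smul]

lemma injective_redCombination_basis (b : Module.Basis ι R Mo) :
    Function.Injective (redCombination aug b) := by
  refine (injective_iff_map_eq_zero _).2 fun φ hφ => Finsupp.ext fun i => ?_
  rw [redCombination_eq_redMk_linearCombination, redMk_eq_zero_iff] at hφ
  simpa using aug_repr_eq_zero_of_mem_redSub aug b hφ i

lemma redCombination_mapRange_aug (v : ι → Mo) (c : ι →₀ R) :
    redCombination aug v (c.mapRange aug (map_zero aug)) =
      redMk aug (Finsupp.linearCombination R v c) := by
  induction c using Finsupp.induction_linear with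
  | zero => simp
  | add c d hc hd => rw [Finsupp.mapRange_add (map_add aug), map_add, hc, hd, map_add, map_add]
  | single i r =>
    rw [Finsupp.mapRange_single, redCombination_single, Finsupp.linearCombination_single,
      ← map_smul, redMk_algebraMap_aug_smul]

lemma bijective_redCombination_basis (b : Module.Basis ι R Mo) :
    Function.Bijective (redCombination aug b) :=
  ⟨injective_redCombination_basis aug b, fun y => by
    obtain ⟨m, rfl⟩ := Submodule.mkQ_surjective _ y
    exact ⟨_, (redCombination_mapRange_aug aug b (b.repr m)).trans
      (congrArg (redMk aug) (b.linearCombination_repr m))⟩⟩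

lemma redCombination_mem_of_supported (v : ι → Mo) (N : Submodule R (Red aug (Mo := Mo)))
    {s : Set ι} (hs : ∀ i ∈ s, redMk aug (v i) ∈ N) {φ : ι →₀ ℝ}
    (hφ : φ ∈ Finsupp.supported ℝ ℝ s) : redCombination aug v φ ∈ N := by
  rw [redCombination_apply, Finsupp.sum, map_sum]
  exact N.sum_mem fun i hi => by
    rw [map_smul]
    exact N.smul_mem _ (hs i (hφ hi))

lemma redCombination_comp_eq_redMap [Fintype ι] (v : ι → Mo) (T : Mo →ₗ[R] Mo)
    (A : (ι →₀ ℝ) →ₗ[ℝ] (ι →₀ ℝ))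
    (hA : ∀ i, ∃ r : ι → R, T (v i) = ∑ j, r j • v j ∧
      A (Finsupp.single i 1) = ∑ j, aug (r j) • Finsupp.single j 1)
    (φ : ι →₀ ℝ) : redCombination aug v (A φ) = redMap aug T (redCombination aug v φ) := by
  induction φ using Finsupp.induction_linear with
  | zero => simp
  | add φ ψ hφ hψ => simp only [map_add, hφ, hψ]
  | single i c =>
    obtain ⟨r, hT, hAi⟩ := hA i
    rw [← mul_one c, ← smul_eq_mul, ← Finsupp.smul_single, map_smul, redCombination_smul,
      redCombination_smul, hAi, redCombination_sum_aug_smul_single, redCombination_single,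
      map_one, one_smul, map_smul, redMap_redMk, hT]

end Reduction

lemma selectedWord_length_le : ∀ (l : List B) (e : List Bool),
    (selectedWord l e).length ≤ l.length
  | [], e => by cases e <;> simp [selectedWord]
  | s :: l, [] => by simp [selectedWord]
  | s :: l, true :: e => by simpa [selectedWord] using selectedWord_length_le l e
  | s :: l, false :: e => by
      simpa [selectedWord] using (selectedWord_length_le l e).trans (Nat.le_succ _)

lemma length_lt_of_bruhatLT (cs : CoxeterSystem M W) {u x : W} (h : bruhatLT cs u x) :
    cs.length u < cs.length x := by
  induction h with
  | single h => exact h.2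
  | tail _ h ih => exact ih.trans h.2

lemma length_le_of_cLeaf (cs : CoxeterSystem M W) (ω : List B) {x : W} (e : CLeaf cs ω x) :
    cs.length x ≤ ω.length := by
  rw [← e.2]
  exact (cs.length_wordProd_le _).trans (selectedWord_length_le _ _)

lemma isEmpty_cLeaf_of_bruhatLT (cs : CoxeterSystem M W) {ω : List B} (hω : cs.IsReduced ω)
    {x : W} (h : bruhatLT cs (cs.wordProd ω) x) : IsEmpty (CLeaf cs ω x) :=
  ⟨fun e => by
    have := length_le_of_cLeaf cs ω e
    have := length_lt_of_bruhatLT cs h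
    rw [hω] at this
    omega⟩

namespace SoergelHomData

variable {cs : CoxeterSystem M W} (D : SoergelHomData cs R)

lemma hom_rho_eq_zero_of_bruhatLT {u x : W} (hux : bruhatLT cs u x)
    (h : D.BS (D.rho u) ⟶ D.Rstd x) : h = 0 := by
  obtain ⟨b, -⟩ := D.std_basis (D.rho u) x
  have : IsEmpty (CLeaf cs (D.rho u) x) :=
    isEmpty_cLeaf_of_bruhatLT cs (D.rho_reduced u) (by rwa [D.rho_prod])
  exact b.ext_elem_iff.2 fun i => isEmptyElim i

lemma comp_beta_eq_zero_of_mem_DLlt {ω : List B} {x : W} {d : D.BS ω ⟶ D.BS (D.rho x)}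
    (hd : d ∈ DLlt D ω (D.rho x) x) : d ≫ D.beta x = 0 := by
  change Linear.rightComp R (D.BS ω) (D.beta x) d = 0
  rw [← LinearMap.mem_ker]
  refine Submodule.span_le.2 ?_ hd
  rintro _ ⟨u, hu, l₁, l₂, rfl⟩
  simp [D.hom_rho_eq_zero_of_bruhatLT hu (D.adj (D.rho x) u l₂ ≫ D.beta x)]

lemma comp_stdLeaf_eq_sum [DecidableEq W] {ω : List B} {x : W} (a : D.BS ω ⟶ D.BS ω)
    (l : CLeaf cs ω x) (r : CLeaf cs ω x → R)
    (hr : a ≫ D.leafMor ω x l - ∑ g, r g • D.leafMor ω x g ∈ DLlt D ω (D.rho x) x) :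
    a ≫ D.leafMor ω x l ≫ D.beta x = ∑ g, r g • (D.leafMor ω x g ≫ D.beta x) := by
  have h := D.comp_beta_eq_zero_of_mem_DLlt hr
  rw [Preadditive.sub_comp, Preadditive.sum_comp, sub_eq_zero] at h
  simp only [← Category.assoc, h, Linear.smul_comp]

end SoergelHomData

theorem cell_module_iso_reduced_hom_general
    {B : Type*} {W : Type*} [Group W] [DecidableEq W] {M : CoxeterMatrix B}
    (cs : CoxeterSystem M W) [Algebra ℝ R] (aug : R →ₐ[ℝ] ℝ)
    (D : SoergelHomData cs R)
    (ww : List B)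
    (x : W)
    -- the right action of A = End^ℤ(BS(w̲)) ⊗_R ℝ on the cell module Δ_{w̲}(x),
    -- determined by expanding l ∘ a in the double leaves basis modulo DL_{<x}:
    (act : (D.BS ww ⟶ D.BS ww) → (CLeaf cs ww x →₀ ℝ) →ₗ[ℝ] (CLeaf cs ww x →₀ ℝ))
    (hact : ∀ (a : D.BS ww ⟶ D.BS ww) (l : CLeaf cs ww x),
      ∃ r : CLeaf cs ww x → R,
        ((a ≫ D.leafMor ww x l - ∑ g : CLeaf cs ww x, r g • D.leafMor ww x g)
            ∈ DLlt D ww (D.rho x) x) ∧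
        act a (Finsupp.single l 1)
          = ∑ g : CLeaf cs ww x, aug (r g) • Finsupp.single g 1)
    -- the grading of Hom^ℤ(BS(w̲), R_x) ⊗_R ℝ, for which standard leaves are homogeneous:
    (grX : ℤ → Submodule R (Red aug (Mo := D.BS ww ⟶ D.Rstd x)))
    (hgrX : ∀ l : CLeaf cs ww x,
      redMk aug (D.leafMor ww x l ≫ D.beta x) ∈ grX (leafDeg cs ww l))
    -- the map f, determined by l ↦ (β_x ∘ l) ⊗ 1 and ℝ-linearity:
    (f : (CLeaf cs ww x →₀ ℝ) → Red aug (Mo := D.BS ww ⟶ D.Rstd x))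
    (hf : ∀ φ : CLeaf cs ww x →₀ ℝ,
      f φ = redMk aug (φ.sum fun l c => algebraMap ℝ R c • (D.leafMor ww x l ≫ D.beta x))) :
    Function.Bijective f ∧
    (∀ (a : D.BS ww ⟶ D.BS ww) (φ : CLeaf cs ww x →₀ ℝ),
      f (act a φ) = redMap aug (CategoryTheory.Linear.leftComp R (D.Rstd x) a) (f φ)) ∧
    (∀ (k : ℤ) (φ : CLeaf cs ww x →₀ ℝ),
      φ ∈ Finsupp.supported ℝ ℝ {l : CLeaf cs ww x | leafDeg cs ww l = k} →
        f φ ∈ grX k) := by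
  obtain ⟨b, hb⟩ := D.std_basis ww x
  obtain rfl : f = redCombination aug ⇑b := by
    funext φ
    rw [hf, redCombination_apply]
    simp only [hb]
  refine ⟨bijective_redCombination_basis aug b, fun a => ?_, fun k φ hφ => ?_⟩
  · refine redCombination_comp_eq_redMap aug b _ (act a) fun l => ?_
    obtain ⟨r, hr, hact⟩ := hact a l
    exact ⟨r, by simpa [hb] using D.comp_stdLeaf_eq_sum a l r hr, hact⟩
  · exact redCombination_mem_of_supported aug b (grX k)
      (fun l (hl : leafDeg cs ww l = k) => hl ▸ hb l ▸ hgrX l) hφ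

theorem cell_module_iso_reduced_hom
    {B : Type*} {W : Type*} [Group W] [DecidableEq W] {M : CoxeterMatrix B}
    (cs : CoxeterSystem M W) [Algebra ℝ R] (aug : R →ₐ[ℝ] ℝ)
    (D : SoergelHomData cs R)
    (w : W) (ww : List B) (hw : cs.wordProd ww = w) (hred : cs.IsReduced ww)
    (x : W) (hxw : bruhatLE cs x w)
    -- the right action of A = End^ℤ(BS(w̲)) ⊗_R ℝ on the cell module Δ_{w̲}(x),
    -- determined by expanding l ∘ a in the double leaves basis modulo DL_{<x}:
    (act : (D.BS ww ⟶ D.BS ww) → (CLeaf cs ww x →₀ ℝ) →ₗ[ℝ] (CLeaf cs ww x →₀ ℝ))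
    (hact : ∀ (a : D.BS ww ⟶ D.BS ww) (l : CLeaf cs ww x),
      ∃ r : CLeaf cs ww x → R,
        ((a ≫ D.leafMor ww x l - ∑ g : CLeaf cs ww x, r g • D.leafMor ww x g)
            ∈ DLlt D ww (D.rho x) x) ∧
        act a (Finsupp.single l 1)
          = ∑ g : CLeaf cs ww x, aug (r g) • Finsupp.single g 1)
    -- the grading of Hom^ℤ(BS(w̲), R_x) ⊗_R ℝ, for which standard leaves are homogeneous:
    (grX : ℤ → Submodule R (Red aug (Mo := D.BS ww ⟶ D.Rstd x)))
    (hgrX : ∀ l : CLeaf cs ww x,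
      redMk aug (D.leafMor ww x l ≫ D.beta x) ∈ grX (leafDeg cs ww l))
    -- the map f, determined by l ↦ (β_x ∘ l) ⊗ 1 and ℝ-linearity:
    (f : (CLeaf cs ww x →₀ ℝ) → Red aug (Mo := D.BS ww ⟶ D.Rstd x))
    (hf : ∀ φ : CLeaf cs ww x →₀ ℝ,
      f φ = redMk aug (φ.sum fun l c => algebraMap ℝ R c • (D.leafMor ww x l ≫ D.beta x))) :
    Function.Bijective f ∧
    (∀ (a : D.BS ww ⟶ D.BS ww) (φ : CLeaf cs ww x →₀ ℝ),
      f (act a φ) = redMap aug (CategoryTheory.Linear.leftComp R (D.Rstd x) a) (f φ)) ∧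
    (∀ (k : ℤ) (φ : CLeaf cs ww x →₀ ℝ),
      φ ∈ Finsupp.supported ℝ ℝ {l : CLeaf cs ww x | leafDeg cs ww l = k} →
        f φ ∈ grX k) :=
  cell_module_iso_reduced_hom_general cs aug D ww x act hact grX hgrX f hf
end

section
/- Let (W,S) be a Coxeter system, u, v ∈ W with u ≤ v, and v̲ a reduced expression for v. Then there is exactly one leaf in L_{v̲}(u) of degree ℓ(v) − ℓ(u). -/
open CoxeterSystem

variable {B : Type*} {W : Type*} [Group W] {M : CoxeterMatrix B}

/-
Reading a subexpression of `ω` from left to right, each letter is a step up or a step down in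
length of the partial product, and counting gives `|ω| = ℓ(u) + n_m + n_j`. Hence
`deg = |ω| - ℓ(u) - 2 n_j`, and for reduced `v̲` the leaves of degree `ℓ(v) - ℓ(u)` are those
with `n_j = 0`, i.e. all of whose steps go up.

By the strong exchange condition, products of subexpressions of `v̲` are closed under going down
in Bruhat order, so `u` is one of them. The strong exchange condition itself comes from the sign
cocycle `η(w, t) = ±1` (`reflCocycle`) obtained by lifting the action of each `s` on `W × ℤˣ`
by `(t, ε) ↦ (s t s, ±ε)`, the sign flipping when `t = s`: `η(w, t)` is the parity of the number
of occurrences of `t` in the right inversion sequence of any word for `w`, and it is `-1`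
exactly when `ℓ(w t) < ℓ(w)`.

A subexpression with all steps up is then built from the right, and it is unique because its last
bit is forced: the last letter `s` is used exactly when `ℓ(u s) < ℓ(u)`.
-/

namespace CoxeterSystem

open List

variable (cs : CoxeterSystem M W)

theorem alternatingWord_two_mul_succ (i j : B) (m : ℕ) :
    alternatingWord i j (2 * (m + 1)) = i :: j :: alternatingWord i j (2 * m) := by
  rw [show 2 * (m + 1) = 2 * m + 1 + 1 by ring, alternatingWord_succ', alternatingWord_succ']
  simp

theorem reverse_alternatingWord_two_mul (i j : B) (m : ℕ) :
    (alternatingWord i j (2 * m)).reverse = alternatingWord j i (2 * m) := by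
  induction m with
  | zero => rfl
  | succ m ih =>
    rw [alternatingWord_two_mul_succ, show 2 * (m + 1) = 2 * m + 1 + 1 by ring,
      alternatingWord_succ, alternatingWord_succ]
    simp [ih]

theorem leftInvSeq_alternatingWord_two_mul (i j : B) (m : ℕ) :
    cs.leftInvSeq (alternatingWord j i (2 * m)) =
      (range (2 * m)).map fun k => cs.simple j * (cs.simple i * cs.simple j) ^ k := by
  refine ext_getElem (by simp) fun k hk _ => ?_
  rw [cs.getElem_leftInvSeq_alternatingWord j i m k (by simpa using hk),
    prod_alternatingWord_eq_mul_pow]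
  simp [Nat.mul_add_div]

theorem even_count_rightInvSeq_alternatingWord_two_mul_M [DecidableEq W] (i j : B) (t : W) :
    Even ((cs.rightInvSeq (alternatingWord i j (2 * M i j))).count t) := by
  rw [← reverse_reverse (alternatingWord i j _), rightInvSeq_reverse, count_reverse,
    reverse_alternatingWord_two_mul, leftInvSeq_alternatingWord_two_mul, two_mul, range_add,
    map_append, map_map]
  have hperiod : ∀ k, cs.simple j * (cs.simple i * cs.simple j) ^ (M i j + k) =
      cs.simple j * (cs.simple i * cs.simple j) ^ k := fun k => by
    rw [pow_add, cs.simple_mul_simple_pow, one_mul]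
  simp only [Function.comp_def, hperiod, count_append]
  exact ⟨_, rfl⟩

open scoped Classical in
noncomputable def simplePerm (i : B) : Equiv.Perm (W × ℤˣ) :=
  (MulAut.conj (cs.simple i)).toEquiv.prodShear
    fun t => Equiv.mulLeft (if t = cs.simple i then -1 else 1)

open scoped Classical in
theorem prod_map_simplePerm_apply (L : List B) (t : W) (ε : ℤˣ) :
    (L.map cs.simplePerm).prod (t, ε) =
      (cs.wordProd L * t * (cs.wordProd L)⁻¹, (-1) ^ (cs.rightInvSeq L).count t * ε) := by
  induction L with
  | nil => simp
  | cons i L ih =>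
    have hconj : cs.wordProd L * t * (cs.wordProd L)⁻¹ = cs.simple i ↔
        (cs.wordProd L)⁻¹ * cs.simple i * cs.wordProd L = t := by
      constructor
      · intro h; rw [← h]; group
      · rintro rfl; group
    rw [map_cons, prod_cons, Equiv.Perm.mul_apply, ih]
    simp only [simplePerm, Equiv.prodShear_apply, MulEquiv.toEquiv_eq_coe, MulEquiv.coe_toEquiv,
      MulAut.conj_apply, Equiv.coe_mulLeft, rightInvSeq, count_cons, beq_iff_eq, wordProd_cons,
      mul_inv_rev, inv_simple, Prod.mk.injEq]
    refine ⟨by group, ?_⟩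
    by_cases h : (cs.wordProd L)⁻¹ * cs.simple i * cs.wordProd L = t
    · simp [h, hconj.mpr h, pow_succ]
    · simp [h, mt hconj.mp h]

theorem isLiftable_simplePerm : M.IsLiftable cs.simplePerm := by
  classical
  intro i j
  have hpow : ∀ m, (cs.simplePerm i * cs.simplePerm j) ^ m =
      ((alternatingWord i j (2 * m)).map cs.simplePerm).prod := fun m => by
    induction m with
    | zero => rfl
    | succ m ih => rw [pow_succ', ih, alternatingWord_two_mul_succ]; simp [mul_assoc]
  ext1 ⟨t, ε⟩
  obtain ⟨k, hk⟩ := cs.even_count_rightInvSeq_alternatingWord_two_mul_M i j t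
  rw [hpow, prod_map_simplePerm_apply, prod_alternatingWord_eq_mul_pow]
  simp [hk, ← two_mul, pow_mul]

noncomputable def reflRep : W →* Equiv.Perm (W × ℤˣ) :=
  cs.lift ⟨cs.simplePerm, cs.isLiftable_simplePerm⟩

noncomputable def reflCocycle (w t : W) : ℤˣ :=
  (cs.reflRep w (t, 1)).2

theorem reflRep_wordProd (L : List B) :
    cs.reflRep (cs.wordProd L) = (L.map cs.simplePerm).prod := by
  rw [wordProd, map_list_prod, map_map]
  congr 1
  exact map_congr_left fun i _ => cs.lift_apply_simple cs.isLiftable_simplePerm i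

open scoped Classical in
theorem reflCocycle_wordProd (L : List B) (t : W) :
    cs.reflCocycle (cs.wordProd L) t = (-1) ^ (cs.rightInvSeq L).count t := by
  rw [reflCocycle, reflRep_wordProd, prod_map_simplePerm_apply, mul_one]

theorem reflRep_apply (w t : W) (ε : ℤˣ) :
    cs.reflRep w (t, ε) = (w * t * w⁻¹, cs.reflCocycle w t * ε) := by
  classical
  obtain ⟨L, rfl⟩ := cs.wordProd_surjective w
  rw [reflRep_wordProd, prod_map_simplePerm_apply, reflCocycle_wordProd]

theorem reflCocycle_mul (x y t : W) :
    cs.reflCocycle (x * y) t = cs.reflCocycle x (y * t * y⁻¹) * cs.reflCocycle y t := by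
  rw [reflCocycle, map_mul, Equiv.Perm.mul_apply, reflRep_apply, reflRep_apply, mul_one]

theorem reflCocycle_one (t : W) : cs.reflCocycle 1 t = 1 := by
  simp [reflCocycle]

open scoped Classical in
theorem reflCocycle_simple (i : B) (t : W) :
    cs.reflCocycle (cs.simple i) t = if t = cs.simple i then -1 else 1 := by
  rw [← cs.wordProd_singleton, reflCocycle_wordProd, rightInvSeq_singleton]
  by_cases h : t = cs.simple i
  · simp [h]
  · simp [h, Ne.symm h]

theorem reflCocycle_self {t : W} (ht : cs.IsReflection t) : cs.reflCocycle t t = -1 := by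
  obtain ⟨w, i, rfl⟩ := ht
  have hinv : cs.reflCocycle w (cs.simple i) *
      cs.reflCocycle w⁻¹ (w * cs.simple i * w⁻¹) = 1 := by
    have h := cs.reflCocycle_mul w w⁻¹ (w * cs.simple i * w⁻¹)
    rwa [mul_inv_cancel, reflCocycle_one, inv_inv,
      show w⁻¹ * (w * cs.simple i * w⁻¹) * w = cs.simple i by group, eq_comm] at h
  calc cs.reflCocycle (w * cs.simple i * w⁻¹) (w * cs.simple i * w⁻¹)
      = cs.reflCocycle (cs.simple i) (cs.simple i) *
          (cs.reflCocycle w (cs.simple i) * cs.reflCocycle w⁻¹ (w * cs.simple i * w⁻¹)) := by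
        rw [reflCocycle_mul, reflCocycle_mul]
        simp [mul_assoc, mul_left_comm]
    _ = -1 := by rw [hinv, reflCocycle_simple, if_pos rfl, mul_one]

theorem reflCocycle_eq_one_of_length_lt {w t : W} (ht : cs.IsReflection t)
    (h : cs.length w < cs.length (w * t)) : cs.reflCocycle w t = 1 := by
  induction hn : cs.length w using Nat.strong_induction_on generalizing w t with
  | _ n ih =>
  rcases eq_or_ne w 1 with rfl | hw
  · exact cs.reflCocycle_one t
  obtain ⟨i, hi⟩ := cs.exists_rightDescent_of_ne_one hw
  have hti : t ≠ cs.simple i := by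
    rintro rfl
    exact lt_asymm h hi
  -- Since `t ≠ s i`, the cocycle at `(w, t)` equals that at `(w * s i, s i * t * s i)`.
  have hsplit := cs.reflCocycle_mul (w * cs.simple i) (cs.simple i) t
  rw [simple_mul_simple_cancel_right, reflCocycle_simple, if_neg hti, mul_one] at hsplit
  have hlt : cs.length (w * cs.simple i) <
      cs.length (w * cs.simple i * (cs.simple i * t * (cs.simple i)⁻¹)) := by
    have := cs.length_mul_simple (w * t) i
    simp only [inv_simple, mul_assoc, simple_mul_simple_cancel_left] at this ⊢
    have : cs.length (w * cs.simple i) < cs.length w := hi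
    omega
  rw [hsplit]
  exact ih _ (hn ▸ hi) (ht.conj _) hlt rfl

theorem reflCocycle_eq_neg_one_of_length_mul_lt {w t : W} (ht : cs.IsReflection t)
    (h : cs.length (w * t) < cs.length w) : cs.reflCocycle w t = -1 := by
  have hup : cs.reflCocycle (w * t) t = 1 :=
    cs.reflCocycle_eq_one_of_length_lt ht (by rwa [mul_assoc, ht.mul_self, mul_one])
  have hsplit := cs.reflCocycle_mul (w * t) t t
  rwa [mul_assoc, ht.mul_self, mul_one, one_mul, ht.inv, cs.reflCocycle_self ht, hup,
    one_mul] at hsplit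

theorem mem_rightInvSeq_of_length_mul_lt (L : List B) {t : W} (ht : cs.IsReflection t)
    (h : cs.length (cs.wordProd L * t) < cs.length (cs.wordProd L)) :
    t ∈ cs.rightInvSeq L := by
  classical
  by_contra hmem
  have hneg := cs.reflCocycle_eq_neg_one_of_length_mul_lt ht h
  rw [reflCocycle_wordProd, count_eq_zero_of_not_mem hmem, pow_zero] at hneg
  exact absurd hneg (by decide)

theorem exists_wordProd_eraseIdx_eq_mul (L : List B) {t : W} (ht : cs.IsReflection t)
    (h : cs.length (cs.wordProd L * t) < cs.length (cs.wordProd L)) :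
    ∃ j, cs.wordProd (L.eraseIdx j) = cs.wordProd L * t := by
  obtain ⟨j, hj, rfl⟩ := getElem_of_mem (cs.mem_rightInvSeq_of_length_mul_lt L ht h)
  exact ⟨j, by rw [← wordProd_mul_getD_rightInvSeq, getD_eq_getElem _ _ hj]⟩

end CoxeterSystem

theorem List.exists_eq_append_singleton_of_length_eq_add_one {α : Type*} {l : List α} {n : ℕ}
    (h : l.length = n + 1) : ∃ f a, l = f ++ [a] ∧ f.length = n := by
  obtain ⟨f, a, rfl⟩ := (l.eq_nil_or_concat').resolve_left (by rintro rfl; simp at h)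
  exact ⟨f, a, rfl, by simpa using h⟩

section Subwords

open List

variable (cs : CoxeterSystem M W)

theorem selectedWord_append_singleton (ω : List B) (e : List Bool) (he : e.length = ω.length)
    (s : B) (b : Bool) :
    selectedWord (ω ++ [s]) (e ++ [b]) = selectedWord ω e ++ if b then [s] else [] := by
  induction ω generalizing e with
  | nil => cases b <;> simp_all [selectedWord]
  | cons a ω ih =>
    obtain _ | ⟨_ | _, e⟩ := e
    · simp at he
    all_goals simp_all [selectedWord]

theorem subwordProd_append_singleton (ω : List B) (e : List Bool) (he : e.length = ω.length)
    (s : B) (b : Bool) :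
    subwordProd cs (ω ++ [s]) (e ++ [b]) =
      subwordProd cs ω e * if b then cs.simple s else 1 := by
  cases b <;>
    simp [subwordProd, selectedWord_append_singleton ω e he, CoxeterSystem.wordProd_append]

theorem exists_selectedWord_eq_eraseIdx (ω : List B) (e : List Bool) (j : ℕ) :
    ∃ e' : List Bool, e'.length = e.length ∧
      selectedWord ω e' = (selectedWord ω e).eraseIdx j := by
  induction ω generalizing e j with
  | nil => exact ⟨e, rfl, by cases e <;> simp [selectedWord]⟩
  | cons s ω ih =>
    obtain _ | ⟨_ | _, e⟩ := e
    · exact ⟨[], rfl, by simp [selectedWord]⟩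
    · obtain ⟨e', hlen, hsel⟩ := ih e j
      exact ⟨false :: e', by simp [hlen], by simpa [selectedWord] using hsel⟩
    · obtain _ | j := j
      · exact ⟨false :: e, rfl, by simp [selectedWord]⟩
      · obtain ⟨e', hlen, hsel⟩ := ih e j
        exact ⟨true :: e', by simp [hlen], by simpa [selectedWord] using hsel⟩

def IsSubwordProd (ω : List B) (u : W) : Prop :=
  ∃ e : List Bool, e.length = ω.length ∧ subwordProd cs ω e = u

variable {cs}

theorem isSubwordProd_wordProd (ω : List B) : IsSubwordProd cs ω (cs.wordProd ω) := by
  refine ⟨replicate ω.length true, length_replicate, ?_⟩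
  induction ω with
  | nil => rfl
  | cons s ω ih =>
    simpa [subwordProd, selectedWord, replicate_succ, CoxeterSystem.wordProd_cons] using ih

theorem IsSubwordProd.mul_of_length_mul_lt {ω : List B} {x t : W} (hx : IsSubwordProd cs ω x)
    (ht : cs.IsReflection t) (hlt : cs.length (x * t) < cs.length x) :
    IsSubwordProd cs ω (x * t) := by
  obtain ⟨e, he, rfl⟩ := hx
  obtain ⟨j, hj⟩ := cs.exists_wordProd_eraseIdx_eq_mul (selectedWord ω e) ht hlt
  obtain ⟨e', he', hsel⟩ := exists_selectedWord_eq_eraseIdx ω e j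
  exact ⟨e', he'.trans he, by rw [subwordProd, hsel, hj, subwordProd]⟩

theorem IsSubwordProd.of_bruhatLE {ω : List B} {u w : W} (hw : IsSubwordProd cs ω w)
    (huw : bruhatLE cs u w) : IsSubwordProd cs ω u := by
  induction huw using Relation.ReflTransGen.head_induction_on with
  | refl => exact hw
  | head hstep _ ih =>
    obtain ⟨⟨t, ht, rfl⟩, hlt⟩ := hstep
    simpa [mul_assoc, ht.mul_self] using
      ih.mul_of_length_mul_lt ht (by simpa [mul_assoc, ht.mul_self] using hlt)

theorem IsSubwordProd.of_append_singleton {ω : List B} {s : B} {u : W}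
    (h : IsSubwordProd cs (ω ++ [s]) u) :
    IsSubwordProd cs ω u ∨ IsSubwordProd cs ω (u * cs.simple s) := by
  obtain ⟨e, he, rfl⟩ := h
  obtain ⟨e, b, rfl, he'⟩ := exists_eq_append_singleton_of_length_eq_add_one (by simpa using he)
  rw [subwordProd_append_singleton cs ω e he']
  cases b
  · exact Or.inl ⟨e, he', by simp⟩
  · exact Or.inr ⟨e, he', by simp [mul_assoc]⟩

end Subwords

section LeafDegree

open List

variable (cs : CoxeterSystem M W)

theorem subwordProd_cons (s : B) (ω : List B) (b : Bool) (e : List Bool) :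
    subwordProd cs (s :: ω) (b :: e) = (if b then cs.simple s else 1) * subwordProd cs ω e := by
  cases b <;> simp [subwordProd, selectedWord, CoxeterSystem.wordProd_cons]

theorem njAux_append_singleton (x : W) (ω : List B) (e : List Bool) (he : e.length = ω.length)
    (s : B) (b : Bool) :
    njAux cs x (ω ++ [s]) (e ++ [b]) = njAux cs x ω e +
      if cs.length (x * subwordProd cs ω e * cs.simple s) =
        cs.length (x * subwordProd cs ω e) + 1 then 0 else 1 := by
  induction ω generalizing x e with
  | nil =>
    obtain rfl : e = [] := length_eq_zero_iff.mp he
    cases b <;> simp [njAux, subwordProd, selectedWord]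
  | cons a ω ih =>
    obtain _ | ⟨b', e⟩ := e
    · simp at he
    have he' : e.length = ω.length := by simpa using he
    cases b' <;> simp [njAux, ih _ e he', subwordProd_cons, mul_assoc] <;> omega

theorem length_add_length_eq_length_add_nmAux_add_njAux (x : W) (ω : List B) (e : List Bool)
    (he : e.length = ω.length) :
    ω.length + cs.length x =
      cs.length (x * subwordProd cs ω e) + nmAux cs x ω e + njAux cs x ω e := by
  induction ω generalizing x e with
  | nil =>
    obtain rfl : e = [] := length_eq_zero_iff.mp he
    simp [nmAux, njAux, subwordProd, selectedWord]
  | cons s ω ih =>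
    obtain _ | ⟨b, e⟩ := e
    · simp at he
    have he' : e.length = ω.length := by simpa using he
    have hs := cs.length_mul_simple x s
    cases b
    · have := ih x e he'
      simp only [nmAux, njAux, subwordProd_cons, length_cons]
      split_ifs <;> simp_all <;> omega
    · have := ih (x * cs.simple s) e he'
      simp only [nmAux, njAux, subwordProd_cons, length_cons]
      split_ifs <;> simp_all [mul_assoc] <;> omega

theorem leafDeg_add_two_mul_leafNj {ω : List B} {u : W} (l : CLeaf cs ω u) :
    leafDeg cs ω l + 2 * leafNj cs ω l = ω.length - cs.length u := by
  have h := length_add_length_eq_length_add_nmAux_add_njAux cs 1 ω (ofFn l.1) length_ofFn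
  rw [one_mul, l.2, cs.length_one] at h
  simp only [leafDeg, leafNm, leafNj]
  omega

end LeafDegree

section UpwardSubexpressions

open List

variable {cs : CoxeterSystem M W}

theorem IsSubwordProd.of_or_of_length_lt_mul_simple {ω : List B} {s : B} {x : W}
    (h : IsSubwordProd cs ω x ∨ IsSubwordProd cs ω (x * cs.simple s))
    (hx : cs.length x < cs.length (x * cs.simple s)) : IsSubwordProd cs ω x :=
  h.elim id fun h' => by
    simpa using h'.mul_of_length_mul_lt (cs.isReflection_simple s) (by simpa using hx)

theorem IsSubwordProd.exists_njAux_eq_zero {ω : List B} {u : W} (h : IsSubwordProd cs ω u) :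
    ∃ e : List Bool,
      e.length = ω.length ∧ njAux cs 1 ω e = 0 ∧ subwordProd cs ω e = u := by
  induction ω using reverseRecOn generalizing u with
  | nil =>
    obtain ⟨e, he, rfl⟩ := h
    obtain rfl : e = [] := length_eq_zero_iff.mp he
    exact ⟨[], rfl, rfl, rfl⟩
  | append_singleton ω s ih =>
    have hor := h.of_append_singleton
    rcases cs.length_mul_simple u s with hup | hdown
    · obtain ⟨e, he, hnj, rfl⟩ :=
        ih (IsSubwordProd.of_or_of_length_lt_mul_simple hor (by omega))
      refine ⟨e ++ [false], by simp [he], ?_, ?_⟩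
      · rw [njAux_append_singleton cs 1 ω e he, hnj, one_mul, if_pos hup]
      · simp [subwordProd_append_singleton cs ω e he]
    · have hor' : IsSubwordProd cs ω (u * cs.simple s) ∨
          IsSubwordProd cs ω (u * cs.simple s * cs.simple s) := by
        rwa [cs.simple_mul_simple_cancel_right, or_comm]
      obtain ⟨e, he, hnj, hprod⟩ :=
        ih (IsSubwordProd.of_or_of_length_lt_mul_simple hor' (by simp; omega))
      refine ⟨e ++ [true], by simp [he], ?_, ?_⟩
      · rw [njAux_append_singleton cs 1 ω e he, hnj, one_mul, hprod, if_pos (by simp; omega)]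
      · simp [subwordProd_append_singleton cs ω e he, hprod]

theorem eq_of_njAux_eq_zero {ω : List B} {e₁ e₂ : List Bool} (he₁ : e₁.length = ω.length)
    (he₂ : e₂.length = ω.length) (hnj₁ : njAux cs 1 ω e₁ = 0)
    (hnj₂ : njAux cs 1 ω e₂ = 0)
    (hprod : subwordProd cs ω e₁ = subwordProd cs ω e₂) : e₁ = e₂ := by
  induction ω using reverseRecOn generalizing e₁ e₂ with
  | nil => rw [length_eq_zero_iff.mp he₁, length_eq_zero_iff.mp he₂]
  | append_singleton ω s ih =>
    obtain ⟨f₁, b₁, rfl, hf₁⟩ :=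
      exists_eq_append_singleton_of_length_eq_add_one (by simpa using he₁)
    obtain ⟨f₂, b₂, rfl, hf₂⟩ :=
      exists_eq_append_singleton_of_length_eq_add_one (by simpa using he₂)
    simp only [njAux_append_singleton cs 1 ω _ hf₁, njAux_append_singleton cs 1 ω _ hf₂,
      one_mul, Nat.add_eq_zero_iff, ite_eq_left_iff, one_ne_zero, imp_false, not_not] at hnj₁ hnj₂
    rw [subwordProd_append_singleton cs ω f₁ hf₁, subwordProd_append_singleton cs ω f₂ hf₂]
      at hprod
    -- After an upward step the last letter is used exactly when it is a right descent of `u`.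
    have hbit : ∀ (y : W) (b : Bool), cs.length (y * cs.simple s) = cs.length y + 1 →
        (b = true ↔ cs.length (y * (if b then cs.simple s else 1) * cs.simple s) <
          cs.length (y * if b then cs.simple s else 1)) := by
      intro y b hy
      cases b <;> simp [hy]
    obtain rfl : b₁ = b₂ := by
      rw [Bool.eq_iff_iff, hbit _ b₁ hnj₁.2, hprod, ← hbit _ b₂ hnj₂.2]
    rw [ih hf₁ hf₂ hnj₁.1 hnj₂.1 (mul_right_cancel hprod)]

theorem IsSubwordProd.existsUnique_leafNj_eq_zero {ω : List B} {u : W}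
    (h : IsSubwordProd cs ω u) : ∃! l : CLeaf cs ω u, leafNj cs ω l = 0 := by
  obtain ⟨e, he, hnj, hprod⟩ := h.exists_njAux_eq_zero
  have hofFn : ofFn (fun i : Fin ω.length => e[(i : ℕ)]) = e :=
    ext_getElem (by simp [he]) fun _ _ _ => by simp
  refine ⟨⟨_, hofFn ▸ hprod⟩, by simp only [leafNj, hofFn, hnj], fun l hl => ?_⟩
  refine Subtype.ext (ofFn_injective ?_)
  rw [hofFn]
  exact eq_of_njAux_eq_zero length_ofFn he hl hnj (l.2.trans hprod.symm)

end UpwardSubexpressions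

theorem unique_largest_light_leaf (cs : CoxeterSystem M W) (u v : W)
    (huv : bruhatLE cs u v) (vw : List B)
    (hv : cs.wordProd vw = v) (hred : cs.IsReduced vw) :
    ∃! l : CLeaf cs vw u, leafDeg cs vw l = (cs.length v : ℤ) - (cs.length u : ℤ) := by
  subst hv
  have hsub : IsSubwordProd cs vw u := (isSubwordProd_wordProd vw).of_bruhatLE huv
  refine (existsUnique_congr fun l => ?_).mpr hsub.existsUnique_leafNj_eq_zero
  have hdeg := leafDeg_add_two_mul_leafNj cs l
  rw [hred]
  omega
end

section
/- Let u ≤ v in W and v̲ a reduced expression of v. For every leaf l ∈ L_{v̲}(u) one has deg(l) = n_m(l) − n_j(l) and ℓ(v) − ℓ(u) = n_m(l) + n_j(l); consequently, if l ∈ L_{v̲}(u) has degree ℓ(v) − ℓ(u), then n_j(l) = 0, i.e., no morphism of type j_s appears in the construction of l. In particular the unique largest leaf G_v^u of degree ℓ(v) − ℓ(u) involves no morphism of type j_s. -/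
open CoxeterSystem

variable {B : Type*} {W : Type*} [Group W] {M : CoxeterMatrix B}

/-!
STATEMENT 10: Let u ≤ v in W and v̲ a reduced expression of v.  For every leaf
l ∈ L_{v̲}(u) one has deg(l) = n_m(l) − n_j(l) and ℓ(v) − ℓ(u) = n_m(l) + n_j(l);
consequently, if l ∈ L_{v̲}(u) has degree ℓ(v) − ℓ(u), then n_j(l) = 0, i.e. no morphism
of type j_s appears in the construction of l.  In particular the unique largest leaf
G_v^u of degree ℓ(v) − ℓ(u) involves no morphism of type j_s.
-/


/-- Auxiliary: product accumulated step by step. -/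
def prodAux (cs : CoxeterSystem M W) : W → List B → List Bool → W
  | x, s :: l, b :: e => prodAux cs (if b then x * cs.simple s else x) l e
  | x, _, _ => x

lemma prodAux_eq (cs : CoxeterSystem M W) :
    ∀ (l : List B) (e : List Bool) (x : W),
      prodAux cs x l e = x * cs.wordProd (selectedWord l e) := by
  intro l
  induction l with
  | nil => intro e x; cases e <;> simp [prodAux, selectedWord, CoxeterSystem.wordProd_nil]
  | cons s t ih =>
    intro e x
    cases e with
    | nil => simp [prodAux, selectedWord, CoxeterSystem.wordProd_nil]
    | cons b e =>
      cases b <;>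
        simp [prodAux, selectedWord, ih, CoxeterSystem.wordProd_cons, mul_assoc]

lemma key_count (cs : CoxeterSystem M W) :
    ∀ (l : List B) (e : List Bool) (x : W), e.length = l.length →
      (l.length : ℤ) + cs.length x
        = cs.length (prodAux cs x l e) + nmAux cs x l e + njAux cs x l e := by
  intro l
  induction l with
  | nil => intro e x he; simp [prodAux, nmAux, njAux]
  | cons s t ih =>
    intro e x he
    cases e with
    | nil => simp at he
    | cons b e =>
      simp only [List.length_cons, Nat.succ.injEq] at he
      have hrec := ih e (if b then x * cs.simple s else x) he
      have hms := cs.length_mul_simple x s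
      by_cases h : cs.length (x * cs.simple s) = cs.length x + 1
      · cases b <;>
          simp only [prodAux, nmAux, njAux, List.length_cons, if_pos h, ite_true,
            ite_false, Bool.false_eq_true] at hrec ⊢ <;>
          push_cast at hrec ⊢ <;> omega
      · have h2 := hms.resolve_left h
        cases b <;>
          simp only [prodAux, nmAux, njAux, List.length_cons, if_neg h, ite_true,
            ite_false, Bool.false_eq_true] at hrec ⊢ <;>
          push_cast at hrec ⊢ <;> omega

lemma leaf_count (cs : CoxeterSystem M W) (u v : W) (vw : List B)
    (hv : cs.wordProd vw = v) (hred : cs.IsReduced vw) (l : CLeaf cs vw u) :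
    (cs.length v : ℤ) - (cs.length u : ℤ)
      = (leafNm cs vw l : ℤ) + (leafNj cs vw l : ℤ) := by
  have hlen : (List.ofFn l.1).length = vw.length := by simp
  have hk := key_count cs vw (List.ofFn l.1) 1 hlen
  have hp : prodAux cs 1 vw (List.ofFn l.1) = u := by
    rw [prodAux_eq, one_mul]
    exact l.2
  rw [hp] at hk
  have hlv : cs.length v = vw.length := by rw [← hv]; exact hred
  simp only [cs.length_one] at hk
  unfold leafNm leafNj
  omega

theorem largest_leaf_has_no_j (cs : CoxeterSystem M W) (u v : W)
    (huv : bruhatLE cs u v) (vw : List B)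
    (hv : cs.wordProd vw = v) (hred : cs.IsReduced vw) :
    (∀ l : CLeaf cs vw u,
        leafDeg cs vw l = (leafNm cs vw l : ℤ) - (leafNj cs vw l : ℤ) ∧
        (cs.length v : ℤ) - (cs.length u : ℤ) = (leafNm cs vw l : ℤ) + (leafNj cs vw l : ℤ)) ∧
    (∀ l : CLeaf cs vw u,
        leafDeg cs vw l = (cs.length v : ℤ) - (cs.length u : ℤ) → leafNj cs vw l = 0) ∧
    (∀ G : CLeaf cs vw u,
        (∀ l : CLeaf cs vw u, leafDeg cs vw l = (cs.length v : ℤ) - (cs.length u : ℤ) ↔ l = G) →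
        leafNj cs vw G = 0) := by
  refine ⟨fun l => ⟨rfl, leaf_count cs u v vw hv hred l⟩, ?_, ?_⟩
  · intro l hdeg
    have h1 := leaf_count cs u v vw hv hred l
    unfold leafDeg at hdeg
    omega
  · intro G hG
    have hdeg := (hG G).mpr rfl
    have h1 := leaf_count cs u v vw hv hred G
    unfold leafDeg at hdeg
    omega
end
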